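/- Under the hypotheses of the preceding Bochner identity, one has the differential inequality Δ|∇u|² ≥ −⟨∇u, ∇|∇u|²⟩ + ((n²−3n+8)/(2n(n−1)))·R·|∇u|² + (2(n+1)/n)·|∇u|⁴ + ((n−4)²/(8n(n−1)²))·R². -/

import Mathlib

/-- The Hessian `∇²f(v,w)` of a function on Euclidean space. -/
noncomputable def hess12 {n : ℕ} (f : EuclideanSpace ℝ (Fin n) → ℝ)
    (x v w : EuclideanSpace ℝ (Fin n)) : ℝ :=
  inner ℝ (fderiv ℝ (gradient f) x v) w

/-- The Laplacian `Δf = tr ∇²f`. -/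
noncomputable def lap12 {n : ℕ} (f : EuclideanSpace ℝ (Fin n) → ℝ)
    (x : EuclideanSpace ℝ (Fin n)) : ℝ :=
  ∑ i, hess12 f x (EuclideanSpace.single i 1) (EuclideanSpace.single i 1)

/-- The squared norm `|∇²f|²` of the Hessian. -/
noncomputable def hessNormSq12 {n : ℕ} (f : EuclideanSpace ℝ (Fin n) → ℝ)
    (x : EuclideanSpace ℝ (Fin n)) : ℝ :=
  ∑ i, ∑ j, (hess12 f x (EuclideanSpace.single i 1) (EuclideanSpace.single j 1)) ^ 2

/-- Under the hypotheses of the Bochner identity (i.e. with `u = log R`,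
`R > 0` smooth, `Δu = −|∇u|² + ((n−4)/(4(n−1)))·R` and
`Δ|∇u|² = 2|∇²u|² − ⟨∇u,∇|∇u|²⟩ + (1/2)R|∇u|² + 2|∇u|⁴`), one has the differential
inequality `Δ|∇u|² ≥ −⟨∇u, ∇|∇u|²⟩ + ((n²−3n+8)/(2n(n−1)))·R·|∇u|²
+ (2(n+1)/n)·|∇u|⁴ + ((n−4)²/(8n(n−1)²))·R²`. -/
theorem stmt_12 (n : ℕ) (hn : 3 ≤ n)
    (R u : EuclideanSpace ℝ (Fin n) → ℝ)
    (hR : ContDiff ℝ (⊤ : ℕ∞) R) (hRpos : ∀ x, 0 < R x)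
    (hu : ∀ x, u x = Real.log (R x))
    (hlapu : ∀ x, lap12 u x = -‖gradient u x‖ ^ 2 + (((n : ℝ) - 4) / (4 * ((n : ℝ) - 1))) * R x)
    (hId : ∀ x, lap12 (fun y => ‖gradient u y‖ ^ 2) x
      = 2 * hessNormSq12 u x
        - (inner ℝ (gradient u x) (gradient (fun y => ‖gradient u y‖ ^ 2) x) : ℝ)
        + (1 / 2) * R x * ‖gradient u x‖ ^ 2 + 2 * ‖gradient u x‖ ^ 4) :
    ∀ x, lap12 (fun y => ‖gradient u y‖ ^ 2) x
      ≥ -(inner ℝ (gradient u x) (gradient (fun y => ‖gradient u y‖ ^ 2) x) : ℝ)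
        + (((n : ℝ) ^ 2 - 3 * (n : ℝ) + 8) / (2 * (n : ℝ) * ((n : ℝ) - 1))) * R x * ‖gradient u x‖ ^ 2
        + (2 * ((n : ℝ) + 1) / (n : ℝ)) * ‖gradient u x‖ ^ 4
        + (((n : ℝ) - 4) ^ 2 / (8 * (n : ℝ) * ((n : ℝ) - 1) ^ 2)) * (R x) ^ 2 := by
  intro x
  have hn1 : (1:ℝ) ≤ (n:ℝ) - 1 := by
    have : (3:ℝ) ≤ n := by exact_mod_cast hn
    linarith
  have hnpos : (0:ℝ) < n := by
    have : (3:ℝ) ≤ n := by exact_mod_cast hn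
    linarith
  -- key: n * hessNormSq ≥ (lap u)^2
  have hkey : (lap12 u x) ^ 2 ≤ (n : ℝ) * hessNormSq12 u x := by
    have h1 : (lap12 u x) ^ 2 ≤ (n : ℝ) *
        ∑ i, (hess12 u x (EuclideanSpace.single i 1) (EuclideanSpace.single i 1)) ^ 2 := by
      have := sq_sum_le_card_mul_sum_sq
        (s := (Finset.univ : Finset (Fin n)))
        (f := fun i => hess12 u x (EuclideanSpace.single i 1) (EuclideanSpace.single i 1))
      simpa [lap12, Finset.card_univ] using this
    refine h1.trans (mul_le_mul_of_nonneg_left ?_ hnpos.le)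
    apply Finset.sum_le_sum
    intro i _
    have : (hess12 u x (EuclideanSpace.single i 1) (EuclideanSpace.single i 1)) ^ 2
        ≤ ∑ j, (hess12 u x (EuclideanSpace.single i 1) (EuclideanSpace.single j 1)) ^ 2 := by
      have := Finset.single_le_sum
        (f := fun j => (hess12 u x (EuclideanSpace.single i 1) (EuclideanSpace.single j 1)) ^ 2)
        (fun j _ => sq_nonneg _) (Finset.mem_univ i)
      simpa using this
    exact this
  set A := ‖gradient u x‖ ^ 2 with hA
  set Rx := R x with hRx
  have hlap : lap12 u x = -A + (((n : ℝ) - 4) / (4 * ((n : ℝ) - 1))) * Rx := hlapu x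
  rw [hId x, ge_iff_le]
  have hA4 : ‖gradient u x‖ ^ 4 = A ^ 2 := by rw [hA]; ring
  rw [hA4]
  have hn1pos : (0:ℝ) < (n:ℝ) - 1 := by linarith
  have hkey' : (-A + (((n : ℝ) - 4) / (4 * ((n : ℝ) - 1))) * Rx) ^ 2
      ≤ (n : ℝ) * hessNormSq12 u x := by rw [← hlap]; exact hkey
  have h2 : 2 / (n:ℝ) * (-A + (((n:ℝ) - 4) / (4 * ((n:ℝ) - 1))) * Rx) ^ 2
      ≤ 2 * hessNormSq12 u x := by
    rw [div_mul_eq_mul_div, div_le_iff₀ hnpos]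
    nlinarith [hkey']
  have hne : ((n:ℝ) - 1) ≠ 0 := ne_of_gt hn1pos
  have hne2 : (n:ℝ) ≠ 0 := ne_of_gt hnpos
  have expand : 2 / (n:ℝ) * (-A + (((n:ℝ) - 4) / (4 * ((n:ℝ) - 1))) * Rx) ^ 2
      = 2 / (n:ℝ) * A ^ 2 - (((n:ℝ) - 4) / ((n:ℝ) * ((n:ℝ) - 1))) * Rx * A
        + (((n:ℝ) - 4) ^ 2 / (8 * (n:ℝ) * ((n:ℝ) - 1) ^ 2)) * Rx ^ 2 := by
    field_simp
    ring
  rw [expand] at h2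
  have hc1 : (((n:ℝ) ^ 2 - 3 * (n:ℝ) + 8) / (2 * (n:ℝ) * ((n:ℝ) - 1)))
      = 1 / 2 - ((n:ℝ) - 4) / ((n:ℝ) * ((n:ℝ) - 1)) := by
    field_simp
    ring
  have hc2 : (2 * ((n:ℝ) + 1) / (n:ℝ)) = 2 + 2 / (n:ℝ) := by
    field_simp
  rw [hc1, hc2]
  simp only [← hA, ← hRx]
  nlinarith [h2]
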